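/- Abstractly modelling realizability as a predicate Real on LTSs that is downward closed under simulation (if T' ≼ T and Real T then Real T') and closed under gluing at initial states (if Real T1 and Real T2 then Real (T1 ⊔ T2)): any two optimal approximations of a target T are simulation equivalent. Here T' is an approximation of T iff T' ≼ T and Real T', and an approximation T' is optimal iff no approximation T'' of T satisfies T' ≺ T'' (i.e. T' ≼ T'' but not T'' ≼ T'). -/
import Mathlib


/-- A labeled transition system over state type `S` and action type `A`. -/
structure LTS (S A : Type) where
  init : S
  trans : S → A → S → Prop

/-- `R` is a simulation of `T2` by `T1`. -/
def IsSim {S1 S2 A : Type} (T2 : LTS S2 A) (T1 : LTS S1 A) (R : S2 → S1 → Prop) : Prop :=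
  ∀ t2 t1, R t2 t1 → ∀ a t2', T2.trans t2 a t2' →
    ∃ t1', T1.trans t1 a t1' ∧ R t2' t1'

/-- `T2 ≼ T1`: `T1` simulates `T2`. -/
def Simulates {S1 S2 A : Type} (T2 : LTS S2 A) (T1 : LTS S1 A) : Prop :=
  ∃ R, IsSim T2 T1 R ∧ R T2.init T1.init


/-- A bundled LTS over action type `A`. -/
structure BLTS (A : Type) where
  S : Type
  init : S
  trans : S → A → S → Prop

def BLTS.toLTS {A : Type} (T : BLTS A) : LTS T.S A := ⟨T.init, T.trans⟩

/-- `T2 ≼ T1` for bundled LTSs. -/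
def BSim {A : Type} (T2 T1 : BLTS A) : Prop := Simulates T2.toLTS T1.toLTS

/-- The merged LTS obtained by gluing two (disjoint copies of) LTSs at their
initial states: the fresh state `none` identifies both initial states, and all
transitions are kept with the initial states renamed to `none`. -/
def BLTS.glue {A : Type} (T1 T2 : BLTS A) : BLTS A where
  S := Option (T1.S ⊕ T2.S)
  init := none
  trans m a m' :=
    (∃ s s', T1.trans s a s' ∧
      ((s = T1.init ∧ m = none) ∨ (s ≠ T1.init ∧ m = some (Sum.inl s))) ∧
      ((s' = T1.init ∧ m' = none) ∨ (s' ≠ T1.init ∧ m' = some (Sum.inl s')))) ∨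
    (∃ s s', T2.trans s a s' ∧
      ((s = T2.init ∧ m = none) ∨ (s ≠ T2.init ∧ m = some (Sum.inr s))) ∧
      ((s' = T2.init ∧ m' = none) ∨ (s' ≠ T2.init ∧ m' = some (Sum.inr s'))))


/-- `T'` is an approximation of `T`: it is simulated by `T` and realizable. -/
def Approx {A : Type} (Real : BLTS A → Prop) (T T' : BLTS A) : Prop :=
  BSim T' T ∧ Real T'

/-- `T'` is an optimal approximation of `T`: an approximation not strictly
simulated by another approximation. -/
def OptApprox {A : Type} (Real : BLTS A → Prop) (T T' : BLTS A) : Prop :=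
  Approx Real T T' ∧
  ¬ ∃ T'' : BLTS A, Approx Real T T'' ∧ (BSim T' T'' ∧ ¬ BSim T'' T')


theorem bsim_trans {A : Type} {Ta Tb Tc : BLTS A} (h1 : BSim Ta Tb) (h2 : BSim Tb Tc) :
    BSim Ta Tc := by
  obtain ⟨R, hR, hR0⟩ := h1
  obtain ⟨Q, hQ, hQ0⟩ := h2
  refine ⟨fun a c => ∃ b, R a b ∧ Q b c, ?_, ⟨_, hR0, hQ0⟩⟩
  rintro a c ⟨b, hab, hbc⟩ act a' ha'
  obtain ⟨b', hb', hab'⟩ := hR a b hab act a' ha'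
  obtain ⟨c', hc', hbc'⟩ := hQ b c hbc act b' hb'
  exact ⟨c', hc', b', hab', hbc'⟩

/-- The categorical join: a fresh initial state with the initial transitions of
both components, leading into disjoint copies. -/
def BLTS.join {A : Type} (T1 T2 : BLTS A) : BLTS A where
  S := Option (T1.S ⊕ T2.S)
  init := none
  trans m a m' :=
    (∃ s', m = none ∧ m' = some (Sum.inl s') ∧ T1.trans T1.init a s') ∨
    (∃ s', m = none ∧ m' = some (Sum.inr s') ∧ T2.trans T2.init a s') ∨
    (∃ s s', m = some (Sum.inl s) ∧ m' = some (Sum.inl s') ∧ T1.trans s a s') ∨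
    (∃ s s', m = some (Sum.inr s) ∧ m' = some (Sum.inr s') ∧ T2.trans s a s')

theorem left_le_join {A : Type} (T1 T2 : BLTS A) : BSim T1 (T1.join T2) := by
  refine ⟨fun s m => m = some (Sum.inl s) ∨ (m = none ∧ s = T1.init), ?_, Or.inr ⟨rfl, rfl⟩⟩
  rintro s m (rfl | ⟨rfl, rfl⟩) a s' hs'
  · exact ⟨some (Sum.inl s'), Or.inr (Or.inr (Or.inl ⟨s, s', rfl, rfl, hs'⟩)), Or.inl rfl⟩
  · exact ⟨some (Sum.inl s'), Or.inl ⟨s', rfl, rfl, hs'⟩, Or.inl rfl⟩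

theorem right_le_join {A : Type} (T1 T2 : BLTS A) : BSim T2 (T1.join T2) := by
  refine ⟨fun s m => m = some (Sum.inr s) ∨ (m = none ∧ s = T2.init), ?_, Or.inr ⟨rfl, rfl⟩⟩
  rintro s m (rfl | ⟨rfl, rfl⟩) a s' hs'
  · exact ⟨some (Sum.inr s'), Or.inr (Or.inr (Or.inr ⟨s, s', rfl, rfl, hs'⟩)), Or.inl rfl⟩
  · exact ⟨some (Sum.inr s'), Or.inr (Or.inl ⟨s', rfl, rfl, hs'⟩), Or.inl rfl⟩

theorem join_le_glue {A : Type} (T1 T2 : BLTS A) : BSim (T1.join T2) (T1.glue T2) := by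
  classical
  refine ⟨fun m g =>
    (m = none ∧ g = none) ∨
    (∃ s, m = some (Sum.inl s) ∧
      ((s = T1.init ∧ g = none) ∨ (s ≠ T1.init ∧ g = some (Sum.inl s)))) ∨
    (∃ s, m = some (Sum.inr s) ∧
      ((s = T2.init ∧ g = none) ∨ (s ≠ T2.init ∧ g = some (Sum.inr s)))),
    ?_, Or.inl ⟨rfl, rfl⟩⟩
  rintro m g hmg a m' hm'
  have tgt1 : ∀ s' : T1.S, ∃ g' : (T1.glue T2).S, ((s' = T1.init ∧ g' = none) ∨
      (s' ≠ T1.init ∧ g' = some (Sum.inl s'))) := by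
    intro s'
    by_cases h : s' = T1.init
    · exact ⟨none, Or.inl ⟨h, rfl⟩⟩
    · exact ⟨some (Sum.inl s'), Or.inr ⟨h, rfl⟩⟩
  have tgt2 : ∀ s' : T2.S, ∃ g' : (T1.glue T2).S, ((s' = T2.init ∧ g' = none) ∨
      (s' ≠ T2.init ∧ g' = some (Sum.inr s'))) := by
    intro s'
    by_cases h : s' = T2.init
    · exact ⟨none, Or.inl ⟨h, rfl⟩⟩
    · exact ⟨some (Sum.inr s'), Or.inr ⟨h, rfl⟩⟩
  rcases hm' with ⟨s', hm, hm'e, ht⟩ | ⟨s', hm, hm'e, ht⟩ |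
      ⟨s, s', hm, hm'e, ht⟩ | ⟨s, s', hm, hm'e, ht⟩
  · subst hm; subst hm'e
    rcases hmg with ⟨_, rfl⟩ | ⟨s, hs, _⟩ | ⟨s, hs, _⟩
    · obtain ⟨g', hg'⟩ := tgt1 s'
      exact ⟨g', Or.inl ⟨T1.init, s', ht, Or.inl ⟨rfl, rfl⟩, hg'⟩,
        Or.inr (Or.inl ⟨s', rfl, hg'⟩)⟩
    · simp at hs
    · simp at hs
  · subst hm; subst hm'e
    rcases hmg with ⟨_, rfl⟩ | ⟨s, hs, _⟩ | ⟨s, hs, _⟩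
    · obtain ⟨g', hg'⟩ := tgt2 s'
      exact ⟨g', Or.inr ⟨T2.init, s', ht, Or.inl ⟨rfl, rfl⟩, hg'⟩,
        Or.inr (Or.inr ⟨s', rfl, hg'⟩)⟩
    · simp at hs
    · simp at hs
  · subst hm; subst hm'e
    rcases hmg with ⟨hs, _⟩ | ⟨t, hts, hg⟩ | ⟨t, hts, _⟩
    · simp at hs
    · obtain rfl : s = t := by injection hts with h; injection h
      obtain ⟨g', hg'⟩ := tgt1 s'
      exact ⟨g', Or.inl ⟨s, s', ht, hg, hg'⟩, Or.inr (Or.inl ⟨s', rfl, hg'⟩)⟩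
    · injection hts with h; injection h
  · subst hm; subst hm'e
    rcases hmg with ⟨hs, _⟩ | ⟨t, hts, _⟩ | ⟨t, hts, hg⟩
    · simp at hs
    · injection hts with h; injection h
    · obtain rfl : s = t := by injection hts with h; injection h
      obtain ⟨g', hg'⟩ := tgt2 s'
      exact ⟨g', Or.inr ⟨s, s', ht, hg, hg'⟩, Or.inr (Or.inr ⟨s', rfl, hg'⟩)⟩

theorem join_le {A : Type} {T1 T2 T : BLTS A} (h1 : BSim T1 T) (h2 : BSim T2 T) :
    BSim (T1.join T2) T := by
  obtain ⟨R1, hR1, h01⟩ := h1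
  obtain ⟨R2, hR2, h02⟩ := h2
  refine ⟨fun m t =>
    (m = none ∧ R1 T1.init t ∧ R2 T2.init t) ∨
    (∃ s, m = some (Sum.inl s) ∧ R1 s t) ∨
    (∃ s, m = some (Sum.inr s) ∧ R2 s t),
    ?_, Or.inl ⟨rfl, h01, h02⟩⟩
  rintro m t hmt a m' hm'
  rcases hm' with ⟨s', hm, hm'e, ht⟩ | ⟨s', hm, hm'e, ht⟩ |
      ⟨s, s', hm, hm'e, ht⟩ | ⟨s, s', hm, hm'e, ht⟩
  · subst hm; subst hm'e
    rcases hmt with ⟨_, hr1, _⟩ | ⟨s, hs, _⟩ | ⟨s, hs, _⟩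
    · obtain ⟨t', ht', hr⟩ := hR1 _ _ hr1 a s' ht
      exact ⟨t', ht', Or.inr (Or.inl ⟨s', rfl, hr⟩)⟩
    · simp at hs
    · simp at hs
  · subst hm; subst hm'e
    rcases hmt with ⟨_, _, hr2⟩ | ⟨s, hs, _⟩ | ⟨s, hs, _⟩
    · obtain ⟨t', ht', hr⟩ := hR2 _ _ hr2 a s' ht
      exact ⟨t', ht', Or.inr (Or.inr ⟨s', rfl, hr⟩)⟩
    · simp at hs
    · simp at hs
  · subst hm; subst hm'e
    rcases hmt with ⟨hs, _⟩ | ⟨u, hus, hr⟩ | ⟨u, hus, _⟩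
    · simp at hs
    · obtain rfl : s = u := by injection hus with h; injection h
      obtain ⟨t', ht', hr'⟩ := hR1 _ _ hr a s' ht
      exact ⟨t', ht', Or.inr (Or.inl ⟨s', rfl, hr'⟩)⟩
    · injection hus with h; injection h
  · subst hm; subst hm'e
    rcases hmt with ⟨hs, _⟩ | ⟨u, hus, _⟩ | ⟨u, hus, hr⟩
    · simp at hs
    · injection hus with h; injection h
    · obtain rfl : s = u := by injection hus with h; injection h
      obtain ⟨t', ht', hr'⟩ := hR2 _ _ hr a s' ht
      exact ⟨t', ht', Or.inr (Or.inr ⟨s', rfl, hr'⟩)⟩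

/-- If realizability is downward closed under simulation and closed under
gluing at initial states, then any two optimal approximations of a target are
simulation equivalent. -/
theorem optimal_approximation_unique {A : Type} (Real : BLTS A → Prop)
    (hdown : ∀ T T' : BLTS A, BSim T' T → Real T → Real T')
    (hglue : ∀ T1 T2 : BLTS A, Real T1 → Real T2 → Real (T1.glue T2))
    (T T1 T2 : BLTS A)
    (h1 : OptApprox Real T T1) (h2 : OptApprox Real T T2) :
    BSim T1 T2 ∧ BSim T2 T1 := by
  obtain ⟨⟨h1T, h1R⟩, h1opt⟩ := h1
  obtain ⟨⟨h2T, h2R⟩, h2opt⟩ := h2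
  set J := T1.join T2 with hJ
  have hJT : BSim J T := join_le h1T h2T
  have hJR : Real J := hdown _ _ (join_le_glue T1 T2) (hglue _ _ h1R h2R)
  have hJapprox : Approx Real T J := ⟨hJT, hJR⟩
  have hJ1 : BSim J T1 := by
    by_contra h
    exact h1opt ⟨J, hJapprox, left_le_join T1 T2, h⟩
  have hJ2 : BSim J T2 := by
    by_contra h
    exact h2opt ⟨J, hJapprox, right_le_join T1 T2, h⟩
  exact ⟨bsim_trans (left_le_join T1 T2) hJ2, bsim_trans (right_le_join T1 T2) hJ1⟩
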